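/- Gaussian gradient through the factor R: For a twice continuously differentiable f : ℝᵏ → ℝ of polynomial growth, the gradient with respect to the matrix R of E_{ε ∼ N(0,I)}[f(μ + R ε)] equals E_{ε ∼ N(0,I)}[g εᵀ]ᵀ entrywise, i.e. ∂/∂R_{ij} E[f(μ + R ε)] = E[ε_j (∇f)_i(μ + R ε)]. -/

import Mathlib

open MeasureTheory ProbabilityTheory Matrix

/-- The standard Gaussian measure `N(0, I)` on `ℝᵏ`. -/
noncomputable def stdGaussianPi (k : ℕ) : Measure (Fin k → ℝ) :=
  Measure.pi (fun _ => gaussianReal 0 1)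

/-- Polynomial growth for a function on `ℝᵏ`. -/
def PolyGrowth {k : ℕ} (f : (Fin k → ℝ) → ℝ) : Prop :=
  ∃ C : ℝ, ∃ n : ℕ, ∀ x, |f x| ≤ C * (1 + ‖x‖) ^ n

/-- Polynomial growth of the gradient. -/
def GradPolyGrowth {k : ℕ} (f : (Fin k → ℝ) → ℝ) : Prop :=
  ∃ C : ℝ, ∃ n : ℕ, ∀ x, ‖fderiv ℝ f x‖ ≤ C * (1 + ‖x‖) ^ n

/-!
Since `(R + t E_{ij}) ε = R ε + t ε_j e_i`, the claim is differentiation under the integral sign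
along the line `t ↦ μ + R ε + t ε_j e_i`. For `|t| ≤ 1` the `t`-derivative `ε_j ∂_i f(…)` is
dominated by a polynomial in `‖ε‖`, which is integrable since a Gaussian measure has moments of
every order (Fernique), so dominated differentiation applies.
-/

lemma stdGaussianPi_eq_map_stdGaussian (k : ℕ) :
    stdGaussianPi k =
      (stdGaussian (EuclideanSpace ℝ (Fin k))).map (EuclideanSpace.equiv (Fin k) ℝ) := by
  rw [← map_pi_eq_stdGaussian, Measure.map_map (by fun_prop) (by fun_prop)]
  exact (Measure.map_id).symm

instance isGaussian_stdGaussianPi (k : ℕ) : IsGaussian (stdGaussianPi k) := by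
  rw [stdGaussianPi_eq_map_stdGaussian]
  infer_instance

lemma ProbabilityTheory.IsGaussian.integrable_one_add_norm_pow {E : Type*}
    [NormedAddCommGroup E] [NormedSpace ℝ E] [MeasurableSpace E] [BorelSpace E] [CompleteSpace E]
    [SecondCountableTopology E]
    (ν : Measure E) [IsGaussian ν] (n : ℕ) :
    Integrable (fun x => (1 + ‖x‖) ^ n) ν := by
  have hid : MemLp (fun x : E => ‖x‖) n ν := (IsGaussian.memLp_id ν n (by simp)).norm
  have h : MemLp (fun x : E => 1 + ‖x‖) n ν := (memLp_const (1 : ℝ)).add hid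
  refine h.integrable_norm_pow'.congr (.of_forall fun x => ?_)
  simp only [Real.norm_eq_abs, abs_of_nonneg (by positivity : (0:ℝ) ≤ 1 + ‖x‖)]

section PolynomialGrowth

variable {V W F : Type*} [NormedAddCommGroup V] [NormedAddCommGroup W] [NormedAddCommGroup F]

lemma norm_comp_le_of_norm_le_mul_one_add_norm_pow {g : W → F} {C : ℝ} {n : ℕ}
    (hg : ∀ y, ‖g y‖ ≤ C * (1 + ‖y‖) ^ n) {φ : V → W} {B : ℝ}
    (hφ : ∀ x, 1 + ‖φ x‖ ≤ B * (1 + ‖x‖)) (x : V) :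
    ‖g (φ x)‖ ≤ C * B ^ n * (1 + ‖x‖) ^ n := by
  have hC : 0 ≤ C := nonneg_of_mul_nonneg_left ((norm_nonneg _).trans (hg 0)) (by positivity)
  calc ‖g (φ x)‖ ≤ C * (1 + ‖φ x‖) ^ n := hg _
    _ ≤ C * (B * (1 + ‖x‖)) ^ n := by gcongr; exact hφ x
    _ = C * B ^ n * (1 + ‖x‖) ^ n := by rw [mul_pow, mul_assoc]

variable [NormedSpace ℝ V] [NormedSpace ℝ W] [NormedSpace ℝ F]

lemma one_add_norm_add_add_smul_le (w : W) (A L : V →L[ℝ] W) {t : ℝ} (ht : |t| ≤ 1) (x : V) :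
    1 + ‖w + A x + t • L x‖ ≤ (1 + ‖w‖ + ‖A‖ + ‖L‖) * (1 + ‖x‖) := by
  have hL : ‖t • L x‖ ≤ ‖L‖ * ‖x‖ := by
    rw [norm_smul, Real.norm_eq_abs]
    exact (mul_le_of_le_one_left (norm_nonneg _) ht).trans (L.le_opNorm x)
  have htri := norm_add₃_le (a := w) (b := A x) (c := t • L x)
  nlinarith [A.le_opNorm x, norm_nonneg x, norm_nonneg w, norm_nonneg A, norm_nonneg L,
    mul_nonneg (norm_nonneg w) (norm_nonneg x)]

lemma hasDerivAt_comp_add_smul {f : W → F} (hf : Differentiable ℝ f) (p v : W) (t : ℝ) :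
    HasDerivAt (fun s : ℝ => f (p + s • v)) (fderiv ℝ f (p + t • v) v) t := by
  have hline : HasDerivAt (fun s : ℝ => p + s • v) v t := by
    simpa using ((hasDerivAt_id t).smul_const v).const_add p
  exact (hf (p + t • v)).hasFDerivAt.comp_hasDerivAt t hline

theorem hasDerivAt_integral_comp_add_smul [CompleteSpace F] [MeasurableSpace V] [BorelSpace V]
    [SecondCountableTopology V] (ν : Measure V)
    (hν : ∀ n : ℕ, Integrable (fun x => (1 + ‖x‖) ^ n) ν) {f : W → F} (hf : ContDiff ℝ 1 f)
    {Cf : ℝ} {nf : ℕ} (hfp : ∀ y, ‖f y‖ ≤ Cf * (1 + ‖y‖) ^ nf)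
    {Cg : ℝ} {ng : ℕ} (hgp : ∀ y, ‖fderiv ℝ f y‖ ≤ Cg * (1 + ‖y‖) ^ ng)
    (w : W) (A L : V →L[ℝ] W) :
    HasDerivAt (fun t : ℝ => ∫ x, f (w + A x + t • L x) ∂ν)
      (∫ x, fderiv ℝ f (w + A x) (L x) ∂ν) 0 := by
  set B := 1 + ‖w‖ + ‖A‖ + ‖L‖
  have hpath : ∀ t ∈ Metric.ball (0 : ℝ) 1, ∀ x, 1 + ‖w + A x + t • L x‖ ≤ B * (1 + ‖x‖) :=
    fun t ht => one_add_norm_add_add_smul_le w A L (mem_ball_zero_iff.1 ht).le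
  have hcont : ∀ t : ℝ, Continuous fun x => w + A x + t • L x := fun t => by fun_prop
  have hF_int : Integrable (fun x => f (w + A x + (0 : ℝ) • L x)) ν :=
    ((hν nf).const_mul (Cf * B ^ nf)).mono' (hf.continuous.comp (hcont 0)).aestronglyMeasurable
      (.of_forall (norm_comp_le_of_norm_le_mul_one_add_norm_pow hfp
        (hpath 0 (Metric.mem_ball_self one_pos))))
  have hF'_meas : AEStronglyMeasurable
      (fun x => fderiv ℝ f (w + A x + (0 : ℝ) • L x) (L x)) ν :=
    (((hf.continuous_fderiv one_ne_zero).comp (hcont 0)).clm_apply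
      L.continuous).aestronglyMeasurable
  have h_bound : ∀ x, ∀ t ∈ Metric.ball (0 : ℝ) 1,
      ‖fderiv ℝ f (w + A x + t • L x) (L x)‖ ≤ Cg * B ^ ng * ‖L‖ * (1 + ‖x‖) ^ (ng + 1) := by
    intro x t ht
    have hD := norm_comp_le_of_norm_le_mul_one_add_norm_pow hgp (hpath t ht) x
    calc ‖fderiv ℝ f (w + A x + t • L x) (L x)‖
        ≤ ‖fderiv ℝ f (w + A x + t • L x)‖ * (‖L‖ * ‖x‖) :=
          ContinuousLinearMap.le_opNorm_of_le _ (L.le_opNorm x)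
      _ ≤ Cg * B ^ ng * (1 + ‖x‖) ^ ng * (‖L‖ * (1 + ‖x‖)) :=
          mul_le_mul hD (by gcongr; linarith) (by positivity) ((norm_nonneg _).trans hD)
      _ = Cg * B ^ ng * ‖L‖ * (1 + ‖x‖) ^ (ng + 1) := by ring
  have hderiv : ∀ x, ∀ t ∈ Metric.ball (0 : ℝ) 1, HasDerivAt
      (fun s => f (w + A x + s • L x)) (fderiv ℝ f (w + A x + t • L x) (L x)) t :=
    fun x t _ => hasDerivAt_comp_add_smul (hf.differentiable one_ne_zero) (w + A x) (L x) t
  simpa using (hasDerivAt_integral_of_dominated_loc_of_deriv_le (Metric.ball_mem_nhds 0 one_pos)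
    (.of_forall fun t => (hf.continuous.comp (hcont t)).aestronglyMeasurable) hF_int hF'_meas
    (.of_forall h_bound) ((hν (ng + 1)).const_mul _) (.of_forall hderiv)).2

end PolynomialGrowth

/-- Stochastic backpropagation through the factor `R`:
`∂/∂R_{ij} E_{ε∼N(0,I)}[f(μ + R ε)] = E[ε_j (∇f)_i(μ + R ε)]`, the derivative
being taken along the matrix direction `E_{ij}`. -/
theorem gradient_wrt_factor {k : ℕ} (f : (Fin k → ℝ) → ℝ)
    (hf : ContDiff ℝ 2 f) (hfp : PolyGrowth f) (hgp : GradPolyGrowth f)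
    (μ : Fin k → ℝ) (R : Matrix (Fin k) (Fin k) ℝ) (i j : Fin k) :
    HasDerivAt
      (fun t : ℝ =>
        ∫ ε, f (μ + (R + t • Matrix.single i j 1).mulVec ε)
          ∂(stdGaussianPi k))
      (∫ ε, ε j * fderiv ℝ f (μ + R.mulVec ε) (Pi.single i 1)
          ∂(stdGaussianPi k))
      0 := by
  obtain ⟨Cf, nf, hCf⟩ := hfp
  obtain ⟨Cg, ng, hCg⟩ := hgp
  have hpath : ∀ (t : ℝ) (ε : Fin k → ℝ),
      μ + (R + t • single i j 1) *ᵥ ε = μ + R *ᵥ ε + t • (single i j 1 *ᵥ ε) := by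
    intro t ε
    rw [add_mulVec, smul_mulVec, add_assoc]
  have hdir : ∀ p ε : Fin k → ℝ,
      fderiv ℝ f p (single i j 1 *ᵥ ε) = ε j * fderiv ℝ f p (Pi.single i 1) := by
    intro p ε
    rw [single_mulVec_eq, one_mul, map_smul, smul_eq_mul]
  simp_rw [hpath, ← hdir]
  exact hasDerivAt_integral_comp_add_smul (stdGaussianPi k)
    (IsGaussian.integrable_one_add_norm_pow _) (hf.of_le one_le_two) hCf hCg μ
    (toLin' R).toContinuousLinearMap (toLin' (single i j 1)).toContinuousLinearMap
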